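/- arXiv:1802.04835 — 2 statements merged into one kernel-verified Lean document; each statement's English description precedes it below -/
import Mathlib

section
/- If A is a normal domain contained in a field F, then for any collection of n-tuples of elements of F each of which is algebraically independent over the fraction field of A, the intersection over all tuples of the Laurent polynomial subrings A[x₁^{±1},...,xₙ^{±1}] ⊆ F is a normal domain. -/
/-!
For an algebraically independent tuple `y`, evaluation at `y` identifies the localization of
`A[X₁, …, Xₙ]` at its monomials with `A[y₁^{±1}, …, yₙ^{±1}] ⊆ F`; polynomial rings over a normal
domain and their localizations are normal, so each of these subrings is normal. An element of the fraction field
of their intersection that is integral over it is a quotient `a / b` of elements of every one of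
these rings and integral over every one of them, hence lies in each of them.
-/

namespace MvPolynomial

theorem isIntegrallyClosed_fin (R : Type*) [CommRing R] [IsDomain R] [IsIntegrallyClosed R]
    (n : ℕ) : IsIntegrallyClosed (MvPolynomial (Fin n) R) := by
  induction n with
  | zero => exact .of_equiv (isEmptyRingEquiv R (Fin 0)).symm
  | succ n ih => exact .of_equiv (finSuccEquiv R n).toRingEquiv.symm

instance {σ R : Type*} [Finite σ] [CommRing R] [IsDomain R] [IsIntegrallyClosed R] :
    IsIntegrallyClosed (MvPolynomial σ R) :=
  have := isIntegrallyClosed_fin R (Nat.card σ)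
  .of_equiv (renameEquiv R (Finite.equivFin σ)).symm.toRingEquiv

noncomputable def monomials (σ R : Type*) [CommSemiring R] : Submonoid (MvPolynomial σ R) :=
  Submonoid.closure (Set.range X)

end MvPolynomial

namespace Subring

variable {F : Type*} [Field F]

theorem isIntegral_of_le {S T : Subring F} (hST : S ≤ T) {z : F} (hz : IsIntegral S z) :
    IsIntegral T z := by
  obtain ⟨p, hp, hpz⟩ := hz
  exact ⟨p.map (inclusion hST), hp.map _, by rwa [Polynomial.eval₂_map]⟩

theorem mem_of_isIntegral_of_mul_mem {S : Subring F} [IsIntegrallyClosed S] {z b : F}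
    (hz : IsIntegral S z) (hb : b ∈ S) (hb0 : b ≠ 0) (hzb : z * b ∈ S) : z ∈ S := by
  let g : FractionRing S →ₐ[S] F :=
    IsFractionRing.liftAlgHom (g := Algebra.ofId S F) Subtype.val_injective
  have hg (s : S) : g (algebraMap S _ s) = s := by simp [g]; rfl
  set w := algebraMap S (FractionRing S) ⟨z * b, hzb⟩ / algebraMap S _ ⟨b, hb⟩
  have hgw : g w = z := by simp [w, hg, hb0]
  obtain ⟨s, hs⟩ := IsIntegrallyClosed.isIntegral_iff.mp
    ((isIntegral_algHom_iff g g.injective).mp (hgw ▸ hz))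
  rw [← hgw, ← hs, hg]
  exact s.2

theorem isIntegrallyClosed_iInf {ι : Type*} (S : ι → Subring F)
    (h : ∀ i, IsIntegrallyClosed (S i)) : IsIntegrallyClosed (⨅ i, S i : Subring F) := by
  set C := ⨅ i, S i
  let g : FractionRing C →ₐ[C] F :=
    IsFractionRing.liftAlgHom (g := Algebra.ofId C F) Subtype.val_injective
  rw [isIntegrallyClosed_iff (FractionRing C)]
  intro x hx
  obtain ⟨a, b, hb, rfl⟩ := IsFractionRing.div_surjective (A := C) x
  have hg (s : C) : g (algebraMap C _ s) = s := by simp [g]; rfl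
  have hb0 : (b : F) ≠ 0 := by simpa using nonZeroDivisors.ne_zero hb
  have hgx : g (algebraMap C _ a / algebraMap C _ b) = a / b := by simp [hg]
  have hzC : (a / b : F) ∈ C := Subring.mem_iInf.mpr fun i ↦
    have := h i
    mem_of_isIntegral_of_mul_mem (isIntegral_of_le (iInf_le S i) (hgx ▸ hx.map g))
      (iInf_le S i b.2) hb0 (by simpa [hb0] using (iInf_le S i a.2))
  exact ⟨⟨_, hzC⟩, g.injective ((hg _).trans hgx.symm)⟩

end Subring

def laurentSubring {F : Type*} [Field F] (A : Subring F) {σ : Type*} (y : σ → F) : Subring F :=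
  Subring.closure ((A : Set F) ∪ Set.range y ∪ Set.range (fun j => (y j)⁻¹))

namespace laurentSubring

open MvPolynomial

variable {F : Type*} [Field F] (A : Subring F) {σ : Type*} {y : σ → F}

theorem monomials_le_comap_aeval (hy : ∀ j, y j ≠ 0) :
    monomials σ A ≤ (IsUnit.submonoid F).comap (aeval y) :=
  Submonoid.closure_le.mpr <| Set.range_subset_iff.mpr fun j ↦ by
    simpa [IsUnit.mem_submonoid_iff] using hy j

theorem aeval_mem (p : MvPolynomial σ A) : aeval y p ∈ laurentSubring A y := by
  have : aeval y p ∈ (Algebra.adjoin A (Set.range y)).toSubring :=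
    Algebra.adjoin_range_eq_range_aeval A y ▸ ⟨p, rfl⟩
  rw [Algebra.adjoin_eq_ring_closure] at this
  refine Subring.closure_mono ?_ this
  rintro _ (⟨a, rfl⟩ | hy)
  exacts [Or.inl (Or.inl a.2), Or.inl (Or.inr hy)]

theorem inv_aeval_mem {m : MvPolynomial σ A} (hm : m ∈ monomials σ A) :
    (aeval y m)⁻¹ ∈ laurentSubring A y := by
  refine (Submonoid.closure_le (S := ((laurentSubring A y).toSubmonoid.comap invMonoidHom).comap
    (aeval y : MvPolynomial σ A →ₐ[A] F).toMonoidHom) |>.mpr ?_) hm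
  rintro _ ⟨j, rfl⟩
  exact Subring.subset_closure (Or.inr ⟨j, by simp⟩)

theorem monomials_le_nonZeroDivisors (hy : ∀ j, y j ≠ 0) :
    monomials σ A ≤ nonZeroDivisors (MvPolynomial σ A) :=
  le_nonZeroDivisors_of_noZeroDivisors fun h ↦ by
    simpa using (monomials_le_comap_aeval A hy h).ne_zero

/-- Evaluation at `y` of Laurent polynomials, realized as the localization of `A[X]` at the
monomials. -/
noncomputable def lift (hy : ∀ j, y j ≠ 0) : Localization (monomials σ A) →+* F :=
  IsLocalization.lift (g := (aeval y).toRingHom) fun m ↦ monomials_le_comap_aeval A hy m.2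

theorem lift_algebraMap (hy : ∀ j, y j ≠ 0) (p : MvPolynomial σ A) :
    lift A hy (algebraMap _ _ p) = aeval y p :=
  IsLocalization.lift_eq ..

theorem lift_mk'_one (hy : ∀ j, y j ≠ 0) (m : monomials σ A) :
    lift A hy (IsLocalization.mk' _ 1 m) = (aeval y (m : MvPolynomial σ A))⁻¹ :=
  (IsLocalization.lift_mk'_spec ..).mpr <| by
    simp [mul_inv_cancel₀ (monomials_le_comap_aeval A hy m.2).ne_zero]

theorem range_lift (hy : ∀ j, y j ≠ 0) :
    RingHom.range (R := Localization (monomials σ A)) (lift A hy) = laurentSubring A y := by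
  refine le_antisymm ?_ (Subring.closure_le.mpr ?_)
  · rintro _ ⟨s, rfl⟩
    obtain ⟨p, m, rfl⟩ := IsLocalization.exists_mk'_eq (monomials σ A) s
    rw [IsLocalization.mk'_eq_mul_mk'_one, map_mul, lift_algebraMap, lift_mk'_one]
    exact mul_mem (aeval_mem A p) (inv_aeval_mem A m.2)
  · rintro _ ((ha | ⟨j, rfl⟩) | ⟨j, rfl⟩)
    · exact ⟨algebraMap (MvPolynomial σ A) _ (C ⟨_, ha⟩), by simp [lift_algebraMap]; rfl⟩
    · exact ⟨algebraMap (MvPolynomial σ A) _ (X j), by simp [lift_algebraMap]⟩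
    · exact ⟨IsLocalization.mk' _ 1 (⟨X j, Submonoid.subset_closure ⟨j, rfl⟩⟩ : monomials σ A),
        by simp [lift_mk'_one]⟩

theorem lift_injective (hy : AlgebraicIndependent A y) :
    Function.Injective (lift A hy.ne_zero) := by
  refine (IsLocalization.lift_injective_iff _).mpr fun p q ↦
    ⟨fun h ↦ congrArg _ <|
      IsLocalization.injective (Localization (monomials σ A))
        (monomials_le_nonZeroDivisors A hy.ne_zero) h,
      fun h ↦ congrArg _ (hy h)⟩

theorem isIntegrallyClosed [Finite σ] [IsIntegrallyClosed A] (hy : AlgebraicIndependent A y) :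
    IsIntegrallyClosed (laurentSubring A y) := by
  have := isIntegrallyClosed_of_isLocalization (Localization (monomials σ A)) _
    (monomials_le_nonZeroDivisors A hy.ne_zero)
  rw [← range_lift A hy.ne_zero]
  exact .of_equiv <| RingEquiv.ofBijective (R := Localization (monomials σ A))
    (RingHom.rangeRestrict (R := Localization (monomials σ A)) (lift A hy.ne_zero))
    ⟨fun _ _ h ↦ lift_injective A hy (congrArg Subtype.val h), RingHom.rangeRestrict_surjective _⟩

end laurentSubring

/-- If `A` is a normal domain contained in a field `F`, then for any collection
of `n`-tuples of elements of `F`, each algebraically independent over (the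
fraction field of) `A`, the intersection over all tuples of the Laurent
polynomial subrings `A[x₁^{±1}, …, xₙ^{±1}] ⊆ F` is a normal domain. -/
theorem upper_cluster_algebra_normal {F : Type*} [Field F] (A : Subring F)
    [IsIntegrallyClosed A] (n : ℕ) {ι : Type*} (x : ι → Fin n → F)
    (hx : ∀ i, AlgebraicIndependent A (x i)) :
    IsIntegrallyClosed
      (⨅ i, Subring.closure
        ((A : Set F) ∪ Set.range (x i) ∪ Set.range (fun j => (x i j)⁻¹)) : Subring F) :=
  Subring.isIntegrallyClosed_iInf _ fun i ↦ laurentSubring.isIntegrallyClosed A (hx i)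
end

section
/- Coefficient mutation is an involution: in a semifield P, for any n-tuple y = (y₁,...,yₙ) of elements of P and integer matrix B, applying the coefficient mutation rule at index k twice (together with the corresponding matrix mutation to update the exponents) returns the original tuple y. -/
/-- Matrix mutation in direction `k`. -/
def matrixMutation {n : ℕ} (B : Matrix (Fin n) (Fin n) ℤ) (k : Fin n) :
    Matrix (Fin n) (Fin n) ℤ :=
  fun i j =>
    if i = k ∨ j = k then -B i j
    else B i j + (|B i k| * B k j + B i k * |B k j|) / 2

/-- Coefficient mutation in direction `k`: `y'_k = y_k⁻¹` and, for `i ≠ k`,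
`y'_i = y_i · y_k^{[B_{ki}]₊} · (y_k ⊕ 1)^{-B_{ki}}`. -/
def coeffMutation {P : Type*} [CommGroup P] (add : P → P → P) {n : ℕ}
    (B : Matrix (Fin n) (Fin n) ℤ) (y : Fin n → P) (k : Fin n) : Fin n → P :=
  fun i =>
    if i = k then (y k)⁻¹
    else y i * y k ^ (max (B k i) 0) * (add (y k) 1) ^ (-(B k i))

private lemma cancel_aux {P : Type*} [CommGroup P] (x A : P) (b : ℤ) :
    x ^ (max b 0) * A ^ (-b) * (x⁻¹) ^ (max (-b) 0) * (x⁻¹ * A) ^ b = 1 := by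
  rw [mul_zpow, inv_zpow, inv_zpow, ← zpow_neg, ← zpow_neg]
  have h1 : x ^ max b 0 * A ^ (-b) * x ^ (-max (-b) 0) * (x ^ (-b) * A ^ b)
      = x ^ (max b 0 + -max (-b) 0 + -b) * A ^ (-b + b) := by
    rw [zpow_add, zpow_add, zpow_add]
    ac_rfl
  rw [h1]
  have h2 : max b 0 + -max (-b) 0 + -b = 0 := by omega
  rw [h2, neg_add_cancel, zpow_zero, zpow_zero, one_mul]

/-- Coefficient mutation is an involution: in a semifield `P` (a multiplicative
abelian group with an auxiliary commutative, associative addition `⊕`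
distributing over multiplication), mutating a coefficient tuple `y` at index
`k` twice (using the mutated matrix the second time) returns `y`. -/
theorem coeffMutation_involutive {P : Type*} [CommGroup P] (add : P → P → P)
    (add_comm : ∀ a b : P, add a b = add b a)
    (add_assoc : ∀ a b c : P, add (add a b) c = add a (add b c))
    (mul_add : ∀ a b c : P, a * add b c = add (a * b) (a * c))
    {n : ℕ} (B : Matrix (Fin n) (Fin n) ℤ) (y : Fin n → P) (k : Fin n) :
    coeffMutation add (matrixMutation B k) (coeffMutation add B y k) k = y := by
  funext i
  by_cases h : i = k
  · simp [coeffMutation, h]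
  · have hA : add (y k)⁻¹ 1 = (y k)⁻¹ * add (y k) 1 := by
      rw [mul_add, inv_mul_cancel, mul_one, add_comm]
    simp only [coeffMutation, matrixMutation, eq_self_iff_true, true_or, if_true,
      if_neg h, hA, neg_neg]
    have := cancel_aux (y k) (add (y k) 1) (B k i)
    calc y i * y k ^ max (B k i) 0 * add (y k) 1 ^ (-B k i) *
          ((y k)⁻¹) ^ max (-B k i) 0 * ((y k)⁻¹ * add (y k) 1) ^ (B k i)
        = y i * (y k ^ max (B k i) 0 * add (y k) 1 ^ (-B k i) *
          ((y k)⁻¹) ^ max (-B k i) 0 * ((y k)⁻¹ * add (y k) 1) ^ (B k i)) := by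
          ac_rfl
      _ = y i := by rw [this, mul_one]
end
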